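/- Bailey's theorem: Let a, b be complex numbers with b not a nonpositive integer and such that none of b/2, (1+b)/2, (a+b)/2, (1−a+b)/2 is a nonpositive integer or zero. Then ∑_{k=0}^∞ (a)_k (1−a)_k (1/2)^k / ((b)_k k!) = Γ(b/2) Γ((1+b)/2) / (Γ((a+b)/2) Γ((1−a+b)/2)). -/

import Mathlib

open Complex Finset Filter Topology

/-- The Pochhammer symbol `(x)_k = x (x+1) ⋯ (x+k-1)`. -/
noncomputable def poch (x : ℂ) (k : ℕ) : ℂ := (ascPochhammer ℂ k).eval x

/-!
Write `F(x) = ₂F₁(a, 1 - a; x; 1/2) = ∑ₖ baileyTerm a x k`. At the argument `1/2` a contiguous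
relation of `₂F₁` becomes the two-step recursion
`F(x) = (a + x)(1 - a + x) / (x (x + 1)) · F(x + 2)`, which telescopes: the difference of the two
series is `wₖ - wₖ₊₁` with `wₖ = 2k / (x + k) · baileyTerm a x k → 0`. Iterating gives
`F(b) = Qₙ · F(b + 2n)`. Written in terms of `b / 2`, each factor of `Qₙ` has the form
`(s₃ + j)(s₄ + j) / ((s₁ + j)(s₂ + j))` with `s₁ + s₂ = s₃ + s₄`, so `Qₙ` is a quotient of Euler's
approximants `GammaSeq` and tends to the quotient of Gamma values, while `F(b + 2n) → 1` because
the Pochhammer symbols in the denominators grow with `n`.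
-/

open scoped Nat

lemma GammaSeq_mul_div_GammaSeq_mul {s₁ s₂ s₃ s₄ : ℂ} (hs : s₁ + s₂ = s₃ + s₄) {n : ℕ}
    (hn : n ≠ 0) :
    GammaSeq s₁ n * GammaSeq s₂ n / (GammaSeq s₃ n * GammaSeq s₄ n) =
      ∏ j ∈ range (n + 1), (s₃ + j) * (s₄ + j) / ((s₁ + j) * (s₂ + j)) := by
  have hn' : (n : ℂ) ≠ 0 := Nat.cast_ne_zero.2 hn
  have hpow : (n : ℂ) ^ s₁ * (n : ℂ) ^ s₂ = (n : ℂ) ^ s₃ * (n : ℂ) ^ s₄ := by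
    rw [← cpow_add _ _ hn', ← cpow_add _ _ hn', hs]
  have hK : (n : ℂ) ^ s₃ * (n : ℂ) ^ s₄ * (n ! * n !) ≠ 0 := by
    have : (n ! : ℂ) ≠ 0 := Nat.cast_ne_zero.2 n.factorial_ne_zero
    simp [cpow_eq_zero_iff, hn', this]
  rw [prod_div_distrib, prod_mul_distrib, prod_mul_distrib]
  simp only [GammaSeq]
  calc _ = (n : ℂ) ^ s₁ * (n : ℂ) ^ s₂ * (n ! * n !) /
        ((∏ j ∈ range (n + 1), (s₁ + j)) * ∏ j ∈ range (n + 1), (s₂ + j)) /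
      ((n : ℂ) ^ s₃ * (n : ℂ) ^ s₄ * (n ! * n !) /
        ((∏ j ∈ range (n + 1), (s₃ + j)) * ∏ j ∈ range (n + 1), (s₄ + j))) := by ring
    _ = _ := by rw [hpow, div_div_div_cancel_left' _ _ hK]

lemma tendsto_prod_range_mul_div_mul {s₁ s₂ s₃ s₄ : ℂ} (hs : s₁ + s₂ = s₃ + s₄)
    (h₃ : ∀ m : ℕ, s₃ ≠ -m) (h₄ : ∀ m : ℕ, s₄ ≠ -m) :
    Tendsto (fun n => ∏ j ∈ range n, (s₃ + j) * (s₄ + j) / ((s₁ + j) * (s₂ + j))) atTop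
      (𝓝 (Gamma s₁ * Gamma s₂ / (Gamma s₃ * Gamma s₄))) := by
  rw [← tendsto_add_atTop_iff_nat 1]
  refine (((GammaSeq_tendsto_Gamma s₁).mul (GammaSeq_tendsto_Gamma s₂)).div
    ((GammaSeq_tendsto_Gamma s₃).mul (GammaSeq_tendsto_Gamma s₄))
    (mul_ne_zero (Gamma_ne_zero h₃) (Gamma_ne_zero h₄))).congr' ?_
  filter_upwards [eventually_ne_atTop 0] with n hn
  exact GammaSeq_mul_div_GammaSeq_mul hs hn

lemma poch_zero (x : ℂ) : poch x 0 = 1 := by simp [poch]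

lemma poch_succ (x : ℂ) (k : ℕ) : poch x (k + 1) = poch x k * (x + k) :=
  ascPochhammer_succ_eval k x

lemma poch_one_left (k : ℕ) : poch 1 k = k ! := by
  simp [poch, ascPochhammer_eval_one]

lemma poch_ne_zero {x : ℂ} (hx : ∀ m : ℕ, x + m ≠ 0) (k : ℕ) : poch x k ≠ 0 := by
  induction k with
  | zero => simp [poch_zero]
  | succ k ih => rw [poch_succ]; exact mul_ne_zero ih (hx k)

lemma poch_add_two_mul (x : ℂ) (k : ℕ) :
    poch (x + 2) k * (x * (x + 1)) = poch x k * ((x + k) * (x + k + 1)) := by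
  induction k with
  | zero => simp [poch_zero]
  | succ k ih =>
    rw [poch_succ, poch_succ]
    push_cast
    linear_combination (x + k + 2) * ih

noncomputable def baileyTerm (a x : ℂ) (k : ℕ) : ℂ :=
  poch a k * poch (1 - a) k * (1 / 2 : ℂ) ^ k / (poch x k * (k ! : ℂ))

lemma baileyTerm_zero (a x : ℂ) : baileyTerm a x 0 = 1 := by
  simp [baileyTerm, poch_zero]

-- No hypothesis on `x`: when `x + k = 0` both sides are junk zeros.
lemma baileyTerm_succ (a x : ℂ) (k : ℕ) :
    baileyTerm a x (k + 1) =
      (a + k) * (1 - a + k) / (2 * (x + k) * (k + 1)) * baileyTerm a x k := by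
  simp only [baileyTerm, poch_succ, Nat.factorial_succ, pow_succ, Nat.cast_mul, Nat.cast_succ,
    div_eq_mul_inv, mul_inv]
  ring

lemma add_natCast_add_natCast_ne_zero {x : ℂ} (hx : ∀ m : ℕ, x + m ≠ 0) (n : ℕ) :
    ∀ m : ℕ, x + n + m ≠ 0 :=
  fun m h => hx (n + m) (by push_cast; linear_combination h)

lemma baileyTerm_add_two (a : ℂ) {x : ℂ} (hx : ∀ m : ℕ, x + m ≠ 0) (k : ℕ) :
    baileyTerm a (x + 2) k = x * (x + 1) / ((x + k) * (x + k + 1)) * baileyTerm a x k := by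
  have hx2 : ∀ m : ℕ, x + 2 + m ≠ 0 := by exact_mod_cast add_natCast_add_natCast_ne_zero hx 2
  have hk1 : x + k + 1 ≠ 0 := by exact_mod_cast add_natCast_add_natCast_ne_zero hx k 1
  have hf : (k ! : ℂ) ≠ 0 := Nat.cast_ne_zero.2 k.factorial_ne_zero
  rw [baileyTerm, baileyTerm, div_mul_div_comm, div_eq_div_iff
    (mul_ne_zero (poch_ne_zero hx2 k) hf)
    (mul_ne_zero (mul_ne_zero (hx k) hk1) (mul_ne_zero (poch_ne_zero hx k) hf))]
  linear_combination -(poch a k * poch (1 - a) k * (1 / 2 : ℂ) ^ k * k !) * poch_add_two_mul x k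

lemma tendsto_baileyTerm_ratio (a x : ℂ) :
    Tendsto (fun k : ℕ => (a + k) * (1 - a + k) / (2 * (x + k) * (k + 1))) atTop (𝓝 (1 / 2)) := by
  have h₁ := tendsto_add_mul_div_add_mul_atTop_nhds a x 1 one_ne_zero
  have h₂ := tendsto_add_mul_div_add_mul_atTop_nhds (1 - a) 2 1 (two_ne_zero (α := ℂ))
  convert h₁.mul h₂ using 2 with k
  · rw [div_mul_div_comm]; congr 1 <;> ring
  · ring

lemma eventually_norm_baileyTerm_succ_le (a x : ℂ) :
    ∀ᶠ k in atTop, ‖baileyTerm a x (k + 1)‖ ≤ 3 / 4 * ‖baileyTerm a x k‖ := by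
  have hlt : ‖(1 / 2 : ℂ)‖ < 3 / 4 := by norm_num
  filter_upwards [(tendsto_baileyTerm_ratio a x).norm.eventually (gt_mem_nhds hlt)] with k hk
  rw [baileyTerm_succ, norm_mul]
  exact mul_le_mul_of_nonneg_right hk.le (norm_nonneg _)

lemma summable_norm_baileyTerm (a x : ℂ) : Summable fun k => ‖baileyTerm a x k‖ :=
  summable_of_ratio_norm_eventually_le (r := 3 / 4) (by norm_num) (by
    simpa only [norm_norm] using eventually_norm_baileyTerm_succ_le a x)

lemma summable_baileyTerm (a x : ℂ) : Summable (baileyTerm a x) :=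
  (summable_norm_baileyTerm a x).of_norm

noncomputable def baileyRatio (a x : ℂ) : ℂ := (a + x) * (1 - a + x) / (x * (x + 1))

lemma baileyTerm_sub_baileyRatio_mul (a : ℂ) {x : ℂ} (hx : ∀ m : ℕ, x + m ≠ 0) (k : ℕ) :
    baileyTerm a x k - baileyRatio a x * baileyTerm a (x + 2) k =
      2 * k / (x + k) * baileyTerm a x k -
        2 * (k + 1 : ℕ) / (x + (k + 1 : ℕ)) * baileyTerm a x (k + 1) := by
  have h₀ : x ≠ 0 := by simpa using hx 0
  have h₁ : x + 1 ≠ 0 := by simpa using hx 1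
  have hk₀ := hx k
  have hk₁ : x + k + 1 ≠ 0 := by exact_mod_cast add_natCast_add_natCast_ne_zero hx k 1
  rw [baileyTerm_add_two a hx, baileyTerm_succ, baileyRatio, Nat.cast_succ, ← add_assoc]
  field_simp
  ring

lemma tsum_baileyTerm_eq_baileyRatio_mul (a : ℂ) {x : ℂ} (hx : ∀ m : ℕ, x + m ≠ 0) :
    ∑' k, baileyTerm a x k = baileyRatio a x * ∑' k, baileyTerm a (x + 2) k := by
  set w : ℕ → ℂ := fun k => 2 * k / (x + k) * baileyTerm a x k
  have hw : Tendsto w atTop (𝓝 0) := by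
    simpa using (tendsto_add_mul_div_add_mul_atTop_nhds 0 x 2 one_ne_zero).mul
      (summable_baileyTerm a x).tendsto_atTop_zero
  have hs := summable_baileyTerm a x
  have hs₂ := summable_baileyTerm a (x + 2)
  have htel : HasSum (fun k => baileyTerm a x k - baileyRatio a x * baileyTerm a (x + 2) k) 0 := by
    have hpartial : ∀ n, ∑ k ∈ range n,
        (baileyTerm a x k - baileyRatio a x * baileyTerm a (x + 2) k) = w 0 - w n := fun n => by
      rw [← Finset.sum_range_sub' w n]
      exact sum_congr rfl fun k _ => baileyTerm_sub_baileyRatio_mul a hx k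
    have hw₀ : w 0 = 0 := by simp [w]
    rw [(hs.sub (hs₂.mul_left _)).hasSum_iff_tendsto_nat]
    simpa [hpartial, hw₀] using hw.const_sub (w 0)
  linear_combination -htel.unique (hs.hasSum.sub (hs₂.hasSum.mul_left _))

lemma tsum_baileyTerm_eq_prod_mul (a : ℂ) {b : ℂ} (hb : ∀ m : ℕ, b + m ≠ 0) (n : ℕ) :
    ∑' k, baileyTerm a b k =
      (∏ j ∈ range n, baileyRatio a (b + 2 * j)) * ∑' k, baileyTerm a (b + 2 * n) k := by
  induction n with
  | zero => simp
  | succ n ih =>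
    have hbn : ∀ m : ℕ, b + 2 * n + m ≠ 0 := by
      exact_mod_cast add_natCast_add_natCast_ne_zero hb (2 * n)
    have hshift : b + 2 * ((n + 1 : ℕ) : ℂ) = b + 2 * n + 2 := by push_cast; ring
    rw [ih, tsum_baileyTerm_eq_baileyRatio_mul a hbn, prod_range_succ, mul_assoc, hshift]

lemma mul_factorial_le_norm_poch {y : ℂ} {r : ℝ} (hr : 1 ≤ r) (hy : ∀ j : ℕ, r + j ≤ ‖y + j‖)
    (k : ℕ) : r * (k + 1)! ≤ ‖poch y (k + 1)‖ := by
  induction k with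
  | zero => simpa [poch_succ, poch_zero] using hy 0
  | succ k ih =>
    rw [poch_succ, norm_mul, Nat.factorial_succ, Nat.cast_mul]
    have hk := hy (k + 1)
    calc r * (((k + 1 + 1 : ℕ) : ℝ) * (k + 1)!) = r * (k + 1)! * (1 + (k + 1 : ℕ)) := by
          push_cast; ring
      _ ≤ ‖poch y (k + 1)‖ * ‖y + (k + 1 : ℕ)‖ := by
          gcongr
          linarith

lemma norm_baileyTerm_succ_le (a : ℂ) {y : ℂ} {r : ℝ} (hr : 1 ≤ r)
    (hy : ∀ j : ℕ, r + j ≤ ‖y + j‖) (k : ℕ) :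
    ‖baileyTerm a y (k + 1)‖ ≤ ‖baileyTerm a 1 (k + 1)‖ / r := by
  simp only [baileyTerm, poch_one_left, norm_div, norm_mul, Complex.norm_natCast, div_div]
  refine div_le_div_of_nonneg_left (by positivity) (by positivity) ?_
  rw [mul_right_comm, mul_comm _ r]
  exact mul_le_mul_of_nonneg_right (mul_factorial_le_norm_poch hr hy k) (by positivity)

lemma norm_tsum_baileyTerm_sub_one_le (a : ℂ) {y : ℂ} {r : ℝ} (hr : 1 ≤ r)
    (hy : ∀ j : ℕ, r + j ≤ ‖y + j‖) :
    ‖∑' k, baileyTerm a y k - 1‖ ≤ (∑' k, ‖baileyTerm a 1 (k + 1)‖) / r := by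
  have hs₁ : Summable fun k => ‖baileyTerm a 1 (k + 1)‖ :=
    (summable_nat_add_iff (f := fun k => ‖baileyTerm a 1 k‖) 1).2 (summable_norm_baileyTerm a 1)
  have hsy : Summable fun k => ‖baileyTerm a y (k + 1)‖ :=
    (summable_nat_add_iff (f := fun k => ‖baileyTerm a y k‖) 1).2 (summable_norm_baileyTerm a y)
  rw [(summable_baileyTerm a y).tsum_eq_zero_add, baileyTerm_zero, add_sub_cancel_left,
    ← tsum_div_const]
  exact (norm_tsum_le_tsum_norm hsy).trans
    (hsy.tsum_le_tsum (norm_baileyTerm_succ_le a hr hy) (hs₁.div_const r))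

lemma tendsto_tsum_baileyTerm_add_two_mul (a b : ℂ) :
    Tendsto (fun n : ℕ => ∑' k, baileyTerm a (b + 2 * n) k) atTop (𝓝 1) := by
  have hr : Tendsto (fun n : ℕ => 2 * (n : ℝ) - ‖b‖) atTop atTop :=
    tendsto_atTop_add_const_right _ _
      (tendsto_natCast_atTop_atTop.const_mul_atTop two_pos)
  rw [tendsto_iff_norm_sub_tendsto_zero]
  refine squeeze_zero' (Eventually.of_forall fun n => norm_nonneg _) ?_
    ((tendsto_const_nhds (x := ∑' k, ‖baileyTerm a 1 (k + 1)‖)).div_atTop hr)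
  filter_upwards [hr.eventually_ge_atTop 1] with n hn
  refine norm_tsum_baileyTerm_sub_one_le a hn fun j => ?_
  have h := norm_sub_norm_le ((2 * n + j : ℕ) : ℂ) (-b)
  rw [norm_neg, Complex.norm_natCast] at h
  push_cast at h
  calc 2 * (n : ℝ) - ‖b‖ + j = 2 * n + j - ‖b‖ := by ring
    _ ≤ ‖b + 2 * n + j‖ := by rwa [show b + 2 * n + j = 2 * n + j - -b by ring]

lemma baileyRatio_add_two_mul (a b : ℂ) (j : ℕ) :
    baileyRatio a (b + 2 * j) =
      ((a + b) / 2 + j) * ((1 - a + b) / 2 + j) / ((b / 2 + j) * ((1 + b) / 2 + j)) := by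
  have half : ∀ z : ℂ, z / 2 + j = (z + 2 * j) / 2 := fun z => by ring
  rw [half, half, half, half, div_mul_div_comm, div_mul_div_comm,
    div_div_div_cancel_right₀ (by norm_num), baileyRatio]
  congr 1 <;> ring

theorem bailey_theorem_general (a b : ℂ)
    (hb : ∀ m : ℕ, b ≠ -(m : ℂ))
    (h3 : ∀ m : ℕ, (a + b) / 2 ≠ -(m : ℂ))
    (h4 : ∀ m : ℕ, (1 - a + b) / 2 ≠ -(m : ℂ)) :
    HasSum (fun k : ℕ =>
        poch a k * poch (1 - a) k * (1 / 2 : ℂ) ^ k /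
          (poch b k * (Nat.factorial k : ℂ)))
      (Gamma (b / 2) * Gamma ((1 + b) / 2) /
        (Gamma ((a + b) / 2) * Gamma ((1 - a + b) / 2))) := by
  have hb' : ∀ m : ℕ, b + m ≠ 0 := fun m h => hb m (eq_neg_of_add_eq_zero_left h)
  have hprod := tendsto_prod_range_mul_div_mul (s₁ := b / 2) (s₂ := (1 + b) / 2)
    (by ring) h3 h4
  simp_rw [← baileyRatio_add_two_mul] at hprod
  have hlim := hprod.mul (tendsto_tsum_baileyTerm_add_two_mul a b)
  simp_rw [← tsum_baileyTerm_eq_prod_mul a hb', mul_one] at hlim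
  rw [← tendsto_nhds_unique tendsto_const_nhds hlim]
  exact (summable_baileyTerm a b).hasSum

/-- Bailey's theorem:
`₂F₁(a, 1-a; b; 1/2) = Γ(b/2) Γ((1+b)/2) / (Γ((a+b)/2) Γ((1-a+b)/2))`. -/
theorem bailey_theorem (a b : ℂ)
    (hb : ∀ m : ℕ, b ≠ -(m : ℂ))
    (h1 : ∀ m : ℕ, b / 2 ≠ -(m : ℂ))
    (h2 : ∀ m : ℕ, (1 + b) / 2 ≠ -(m : ℂ))
    (h3 : ∀ m : ℕ, (a + b) / 2 ≠ -(m : ℂ))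
    (h4 : ∀ m : ℕ, (1 - a + b) / 2 ≠ -(m : ℂ)) :
    HasSum (fun k : ℕ =>
        poch a k * poch (1 - a) k * (1 / 2 : ℂ) ^ k /
          (poch b k * (Nat.factorial k : ℂ)))
      (Gamma (b / 2) * Gamma ((1 + b) / 2) /
        (Gamma ((a + b) / 2) * Gamma ((1 - a + b) / 2))) :=
  bailey_theorem_general a b hb h3 h4
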